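/- Let L > 0 and s₀ ∈ ℝ, and define the ramp function g*(s) = 0 for s ≤ s₀, g*(s) = L(s − s₀) for s₀ < s < s₀ + 1/L, and g*(s) = 1 for s ≥ s₀ + 1/L. Then ∫_ℝ s · g*(s) · φ(s) ds = L · (Φ(s₀ + 1/L) − Φ(s₀)). -/

import Mathlib

open MeasureTheory Real

/-- Standard normal density `φ`. -/
noncomputable def stdGaussPDF (t : ℝ) : ℝ :=
  (Real.sqrt (2 * π))⁻¹ * Real.exp (-t ^ 2 / 2)

/-- Standard normal cumulative distribution function `Φ`. -/
noncomputable def stdGaussCDF (x : ℝ) : ℝ := ∫ t in Set.Iic x, stdGaussPDF t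

/-- The optimal ramp: `g*(s) = 0` for `s ≤ s₀`, `g*(s) = L (s - s₀)` for
`s₀ < s < s₀ + 1/L`, and `g*(s) = 1` for `s ≥ s₀ + 1/L`. -/
noncomputable def ramp (L s₀ s : ℝ) : ℝ :=
  if s ≤ s₀ then 0 else if s < s₀ + 1 / L then L * (s - s₀) else 1

/-!
Writing the ramp as `g*(s) = L ((s - s₀)⁺ - (s - s₀ - 1/L)⁺)` reduces the claim to the Gaussian
identity `∫ s (s - a)⁺ φ(s) ds = ∫_a^∞ φ`, which is one integration by parts on `(a, ∞)` using
`φ' = -s φ`.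
-/

open Set Filter Topology

lemma stdGaussPDF_eq (t : ℝ) : stdGaussPDF t = (√(2 * π))⁻¹ * exp (-(1 / 2) * t ^ 2) := by
  rw [stdGaussPDF]
  ring_nf

lemma integrable_pow_mul_stdGaussPDF (n : ℕ) : Integrable fun t ↦ t ^ n * stdGaussPDF t := by
  have h := (integrable_rpow_mul_exp_neg_mul_sq (b := 1 / 2) (by norm_num)
    (s := n) (by linarith [n.cast_nonneg (α := ℝ)])).const_mul (√(2 * π))⁻¹
  refine h.congr (Eventually.of_forall fun t ↦ ?_)
  simp only [rpow_natCast, stdGaussPDF_eq]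
  ring

@[fun_prop]
lemma continuous_stdGaussPDF : Continuous stdGaussPDF := by
  unfold stdGaussPDF
  fun_prop

lemma hasDerivAt_stdGaussPDF (t : ℝ) : HasDerivAt stdGaussPDF (-(t * stdGaussPDF t)) t := by
  have h : HasDerivAt (fun u : ℝ ↦ -u ^ 2 / 2) (-t) t :=
    ((hasDerivAt_pow 2 t).neg.div_const 2).congr_deriv (by ring)
  exact (h.exp.const_mul (√(2 * π))⁻¹).congr_deriv (by rw [stdGaussPDF]; ring)

lemma integrable_stdGaussPDF : Integrable stdGaussPDF := by
  simpa using integrable_pow_mul_stdGaussPDF 0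

lemma stdGaussCDF_sub_stdGaussCDF (a b : ℝ) :
    stdGaussCDF b - stdGaussCDF a
      = (∫ t in Ioi a, stdGaussPDF t) - ∫ t in Ioi b, stdGaussPDF t := by
  rw [stdGaussCDF, stdGaussCDF,
    intervalIntegral.integral_Iic_sub_Iic integrable_stdGaussPDF.integrableOn
      integrable_stdGaussPDF.integrableOn,
    intervalIntegral.integral_Ioi_sub_Ioi' integrable_stdGaussPDF.integrableOn
      integrable_stdGaussPDF.integrableOn]

lemma mul_max_sub_mul_eq_indicator (f : ℝ → ℝ) (a : ℝ) :
    (fun s ↦ s * max (s - a) 0 * f s) = (Ioi a).indicator fun s ↦ (s - a) * (s * f s) := by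
  ext s
  by_cases hs : a < s
  · simp only [max_eq_left (sub_nonneg.2 hs.le), mem_Ioi, hs, indicator_of_mem]
    ring
  · simp [hs, max_eq_right (sub_nonpos.2 (not_lt.1 hs))]

lemma integrable_sub_mul_mul_stdGaussPDF (a : ℝ) :
    Integrable fun s ↦ (s - a) * (s * stdGaussPDF s) := by
  refine ((integrable_pow_mul_stdGaussPDF 2).sub
    ((integrable_pow_mul_stdGaussPDF 1).const_mul a)).congr (Eventually.of_forall fun s ↦ ?_)
  simp only [Pi.sub_apply]
  ring

lemma integral_mul_max_sub_mul_stdGaussPDF (a : ℝ) :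
    ∫ s, s * max (s - a) 0 * stdGaussPDF s = ∫ t in Ioi a, stdGaussPDF t := by
  have hu : ∀ s ∈ Ioi a, HasDerivAt (fun s ↦ s - a) 1 s :=
    fun s _ ↦ (hasDerivAt_id s).sub_const a
  have hv : ∀ s ∈ Ioi a, HasDerivAt (fun s ↦ -stdGaussPDF s) (s * stdGaussPDF s) s :=
    fun s _ ↦ (hasDerivAt_stdGaussPDF s).fun_neg.congr_deriv (neg_neg _)
  have huv' : Integrable fun s ↦ (s - a) * (s * stdGaussPDF s) :=
    integrable_sub_mul_mul_stdGaussPDF a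
  have hu'v : Integrable fun s ↦ 1 * -stdGaussPDF s := by simpa using integrable_stdGaussPDF.neg
  have huv : Integrable fun s ↦ (s - a) * -stdGaussPDF s := by
    refine (((integrable_pow_mul_stdGaussPDF 1).sub
      (integrable_stdGaussPDF.const_mul a)).neg).congr (Eventually.of_forall fun s ↦ ?_)
    simp only [Pi.neg_apply, Pi.sub_apply]
    ring
  have h_zero : Tendsto (fun s ↦ (s - a) * -stdGaussPDF s) (𝓝[>] a) (𝓝 0) := by
    refine (Continuous.tendsto' ?_ a 0 (by simp)).mono_left nhdsWithin_le_nhds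
    fun_prop
  have h_infty : Tendsto (fun s ↦ (s - a) * -stdGaussPDF s) atTop (𝓝 0) :=
    tendsto_zero_of_hasDerivAt_of_integrableOn_Ioi (fun s hs ↦ (hu s hs).mul (hv s hs))
      (hu'v.add huv').integrableOn huv.integrableOn
  rw [mul_max_sub_mul_eq_indicator, integral_indicator measurableSet_Ioi,
    integral_Ioi_mul_deriv_eq_deriv_mul hu hv huv'.integrableOn hu'v.integrableOn h_zero h_infty]
  simp [integral_neg]

lemma integrable_mul_max_sub_mul_stdGaussPDF (a : ℝ) :
    Integrable fun s ↦ s * max (s - a) 0 * stdGaussPDF s := by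
  rw [mul_max_sub_mul_eq_indicator]
  exact (integrable_sub_mul_mul_stdGaussPDF a).integrableOn.integrable_indicator measurableSet_Ioi

lemma ramp_eq_mul_max_sub_max (L s₀ s : ℝ) (hL : 0 < L) :
    ramp L s₀ s = L * (max (s - s₀) 0 - max (s - (s₀ + 1 / L)) 0) := by
  have : 0 < 1 / L := by positivity
  unfold ramp
  split_ifs with h₁ h₂
  · rw [max_eq_right (by linarith), max_eq_right (by linarith)]
    ring
  · rw [max_eq_left (by linarith), max_eq_right (by linarith)]
    ring
  · rw [max_eq_left (by linarith), max_eq_left (by linarith)]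
    field_simp
    ring

/-- **Objective value of the optimal ramp.**
`∫ s g*(s) φ(s) ds = L (Φ(s₀ + 1/L) - Φ(s₀))`. -/
theorem ramp_objective (L s₀ : ℝ) (hL : 0 < L) :
    ∫ s, s * ramp L s₀ s * stdGaussPDF s
      = L * (stdGaussCDF (s₀ + 1 / L) - stdGaussCDF s₀) := by
  calc ∫ s, s * ramp L s₀ s * stdGaussPDF s
      = ∫ s, L * (s * max (s - s₀) 0 * stdGaussPDF s
          - s * max (s - (s₀ + 1 / L)) 0 * stdGaussPDF s) := by
        congr with s
        rw [ramp_eq_mul_max_sub_max L s₀ s hL]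
        ring
    _ = L * (stdGaussCDF (s₀ + 1 / L) - stdGaussCDF s₀) := by
        rw [integral_const_mul, integral_sub (integrable_mul_max_sub_mul_stdGaussPDF _)
          (integrable_mul_max_sub_mul_stdGaussPDF _), integral_mul_max_sub_mul_stdGaussPDF,
          integral_mul_max_sub_mul_stdGaussPDF, stdGaussCDF_sub_stdGaussCDF]
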